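/- Let λ̃₀, λ̃₁, λ̃₂, ρ̃₀, ρ̃₁, ρ̃₂ ∈ ℝ², let d̃ ∈ ℝ² be nonzero, and let κ ∈ ℝ. Define l_i = ⟨ρ̃_i, d̃⟩ and r_i = −⟨λ̃_i, d̃⟩ for i = 0,1,2, and c_k = (1/C(4,k))·∑_{i+j=k, 0≤i,j≤2} C(2,i)·C(2,j)·⟨λ̃_i, ρ̃_j⟩ for k = 0,…,4. If ∑_{i=0}^{2} C(2,i)·κ^i·l_i = 0 and ∑_{i=0}^{2} C(2,i)·κ^i·r_i = 0 (i.e. κ is a common root of the homogenized Bernstein forms of the weight functions l and r), then ∑_{k=0}^{4} C(4,k)·κ^k·c_k = 0, i.e. the weight function c vanishes at κ in the same homogenized Bernstein form. -/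

import Mathlib

/-! Evaluating the homogenized Bernstein forms of `λ̃` and `ρ̃` at `κ` gives two vectors
`λ̃(κ)` and `ρ̃(κ)`. The conditions on `l` and `r` say that both are parallel to the edge
direction `d̃ ≠ 0`, hence to each other; and since `c` is the Bernstein form of the product
`⟨λ̃, ρ̃⟩`, its value at `κ` is `⟨λ̃(κ), ρ̃(κ)⟩ = 0`. -/

open Finset

/-- z-component of the cross product of two planar vectors. -/
def cross2 (a b : ℝ × ℝ) : ℝ := a.1 * b.2 - a.2 * b.1

lemma cross2_eq_zero_of_cross2_eq_zero {a b d : ℝ × ℝ} (hd : d ≠ 0)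
    (ha : cross2 a d = 0) (hb : cross2 b d = 0) : cross2 a b = 0 := by
  unfold cross2 at *
  obtain h | h : d.1 ≠ 0 ∨ d.2 ≠ 0 := by
    by_contra! h
    exact hd (Prod.ext h.1 h.2)
  · refine (mul_eq_zero.mp ?_).resolve_left h
    linear_combination b.1 * ha - a.1 * hb
  · refine (mul_eq_zero.mp ?_).resolve_left h
    linear_combination b.2 * ha - a.2 * hb

lemma cross2_sum_left {ι : Type*} (s : Finset ι) (a : ι → ℝ × ℝ) (b : ℝ × ℝ) :
    cross2 (∑ i ∈ s, a i) b = ∑ i ∈ s, cross2 (a i) b := by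
  simp only [cross2, Prod.fst_sum, Prod.snd_sum, sum_mul, sum_sub_distrib]

lemma cross2_sum_right {ι : Type*} (s : Finset ι) (a : ℝ × ℝ) (b : ι → ℝ × ℝ) :
    cross2 a (∑ i ∈ s, b i) = ∑ i ∈ s, cross2 a (b i) := by
  simp only [cross2, Prod.fst_sum, Prod.snd_sum, mul_sum, sum_sub_distrib]

lemma cross2_smul_left (t : ℝ) (a b : ℝ × ℝ) : cross2 (t • a) b = t * cross2 a b := by
  simp only [cross2, Prod.smul_fst, Prod.smul_snd, smul_eq_mul]
  ring

lemma cross2_smul_right (t : ℝ) (a b : ℝ × ℝ) : cross2 a (t • b) = t * cross2 a b := by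
  simp only [cross2, Prod.smul_fst, Prod.smul_snd, smul_eq_mul]
  ring

def bernsteinEval (n : ℕ) (v : ℕ → ℝ × ℝ) (κ : ℝ) : ℝ × ℝ :=
  ∑ i ∈ range (n + 1), ((n.choose i : ℝ) * κ ^ i) • v i

lemma cross2_bernsteinEval_left (n : ℕ) (v : ℕ → ℝ × ℝ) (κ : ℝ) (d : ℝ × ℝ) :
    cross2 (bernsteinEval n v κ) d =
      ∑ i ∈ range (n + 1), (n.choose i : ℝ) * κ ^ i * cross2 (v i) d := by
  simp only [bernsteinEval, cross2_sum_left, cross2_smul_left]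

lemma cross2_bernsteinEval_bernsteinEval (m n : ℕ) (v w : ℕ → ℝ × ℝ) (κ : ℝ) :
    cross2 (bernsteinEval m v κ) (bernsteinEval n w κ) =
      ∑ i ∈ range (m + 1), ∑ j ∈ range (n + 1),
        κ ^ (i + j) * ((m.choose i : ℝ) * (n.choose j : ℝ) * cross2 (v i) (w j)) := by
  rw [bernsteinEval, cross2_sum_left]
  refine sum_congr rfl fun i _ => ?_
  rw [cross2_smul_left, bernsteinEval, cross2_sum_right, mul_sum]
  refine sum_congr rfl fun j _ => ?_
  rw [cross2_smul_right]
  ring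

lemma sum_choose_mul_pow_mul_diagonal (m n : ℕ) (κ : ℝ) (a : ℕ → ℕ → ℝ) :
    ∑ k ∈ range (m + n + 1), ((m + n).choose k : ℝ) * κ ^ k *
      (1 / ((m + n).choose k : ℝ) *
        ∑ i ∈ range (m + 1), ∑ j ∈ range (n + 1), if i + j = k then a i j else 0) =
      ∑ i ∈ range (m + 1), ∑ j ∈ range (n + 1), κ ^ (i + j) * a i j := by
  have hcancel : ∀ k ∈ range (m + n + 1),
      ((m + n).choose k : ℝ) * κ ^ k * (1 / ((m + n).choose k : ℝ) *
        ∑ i ∈ range (m + 1), ∑ j ∈ range (n + 1), if i + j = k then a i j else 0) =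
      ∑ i ∈ range (m + 1), ∑ j ∈ range (n + 1), if i + j = k then κ ^ k * a i j else 0 := by
    intro k hk
    have hchoose : ((m + n).choose k : ℝ) ≠ 0 :=
      Nat.cast_ne_zero.mpr (Nat.choose_ne_zero (by simpa [Nat.lt_succ_iff] using hk))
    simp only [mul_sum, mul_ite, mul_zero]
    refine sum_congr rfl fun i _ => sum_congr rfl fun j _ => ?_
    split_ifs <;> field_simp
  rw [sum_congr rfl hcancel, sum_comm]
  refine sum_congr rfl fun i hi => ?_
  rw [sum_comm]
  refine sum_congr rfl fun j hj => ?_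
  rw [sum_ite_eq, if_pos]
  simp only [mem_range] at hi hj ⊢
  omega

/-- If `κ` is a common root of the homogenized Bernstein forms of the weight functions
`l` and `r`, then the weight function `c` vanishes at `κ` in the same homogenized
Bernstein form. -/
theorem stmt18 (lam rho : ℕ → ℝ × ℝ) (d : ℝ × ℝ) (hd : d ≠ 0) (κ : ℝ)
    (l r c : ℕ → ℝ)
    (hl : ∀ i, i ≤ 2 → l i = cross2 (rho i) d)
    (hr : ∀ i, i ≤ 2 → r i = -cross2 (lam i) d)
    (hc : ∀ k, k ≤ 4 → c k = (1 / ((4 : ℕ).choose k : ℝ)) *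
      ∑ i ∈ range 3, ∑ j ∈ range 3,
        if i + j = k then ((2 : ℕ).choose i : ℝ) * ((2 : ℕ).choose j : ℝ) *
          cross2 (lam i) (rho j) else 0)
    (hlκ : ∑ i ∈ range 3, ((2 : ℕ).choose i : ℝ) * κ ^ i * l i = 0)
    (hrκ : ∑ i ∈ range 3, ((2 : ℕ).choose i : ℝ) * κ ^ i * r i = 0) :
    ∑ k ∈ range 5, ((4 : ℕ).choose k : ℝ) * κ ^ k * c k = 0 := by
  have hlam : cross2 (bernsteinEval 2 lam κ) d = 0 := by
    rw [cross2_bernsteinEval_left, ← neg_eq_zero, ← sum_neg_distrib, ← hrκ]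
    refine sum_congr rfl fun i hi => ?_
    rw [hr i (Nat.lt_succ_iff.mp (mem_range.mp hi))]
    ring
  have hrho : cross2 (bernsteinEval 2 rho κ) d = 0 := by
    rw [cross2_bernsteinEval_left, ← hlκ]
    exact sum_congr rfl fun i hi => by rw [hl i (Nat.lt_succ_iff.mp (mem_range.mp hi))]
  rw [sum_congr rfl fun k hk => by rw [hc k (Nat.lt_succ_iff.mp (mem_range.mp hk))]]
  rw [show (5 : ℕ) = 2 + 2 + 1 from rfl, show (4 : ℕ) = 2 + 2 from rfl,
    sum_choose_mul_pow_mul_diagonal, ← cross2_bernsteinEval_bernsteinEval]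
  exact cross2_eq_zero_of_cross2_eq_zero hd hlam hrho
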